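/- arXiv:2110.06335 — 5 statements merged into one kernel-verified Lean document; each statement's English description precedes it below -/
import Mathlib

section
/- Let f : D → Im ℍ be a smooth conformal immersion, i.e., f_u² = f_v² = -e^{2h} and f_u f_v = -f_v f_u for a smooth real function h. If additionally f_{uv} ∈ span{f_u, f_v} (f is isothermic), then the quaternion-valued 1-form df* := -(f_u)⁻¹ du + (f_v)⁻¹ dv is closed, i.e., -∂_v (f_u)⁻¹ = ∂_u (f_v)⁻¹. -/
/-!
Differentiating `q ↦ q⁻¹` gives `-∂_v (f_u)⁻¹ = f_u⁻¹ f_{uv} f_u⁻¹` and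
`∂_u (f_v)⁻¹ = -f_v⁻¹ f_{uv} f_v⁻¹`. Conformality says `f_u² = f_v² = -e^{2h}` is a nonzero real,
so both inverses are the same real multiple of `f_u`, `f_v`, and closedness reduces to
`f_u f_{uv} f_u = -f_v f_{uv} f_v`. Writing `f_{uv} = α f_u + β f_v`, this follows from
`f_u² = f_v²` and the anticommutation `f_u f_v = -f_v f_u`.
-/

theorem HasDerivAt.inv' {𝕜 R : Type*} [NontriviallyNormedField 𝕜] [NormedDivisionRing R]
    [NormedAlgebra 𝕜 R] {g : 𝕜 → R} {g' : R} {x : 𝕜} (hg : HasDerivAt g g' x) (hx : g x ≠ 0) :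
    HasDerivAt (fun y => (g y)⁻¹) (-((g x)⁻¹ * g' * (g x)⁻¹)) x := by
  simpa [Function.comp_def] using (hasFDerivAt_inv' (𝕜 := 𝕜) hx).comp_hasDerivAt x hg

section Anticommuting

variable {R A : Type*}

theorem mul_smul_add_smul_mul_eq_neg [CommRing R] [Ring A] [Algebra R A] {a b : A}
    (hsq : a * a = b * b) (hab : a * b = -(b * a)) (α β : R) :
    a * (α • a + β • b) * a = -(b * (α • a + β • b) * b) := by
  have hba : b * a * b = -(a * (b * b)) := by
    rw [neg_eq_iff_eq_neg.mp hab.symm, neg_mul, mul_assoc]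
  have hab' : a * b * a = -(b * (b * b)) := by rw [hab, neg_mul, mul_assoc, hsq]
  simp only [mul_add, add_mul, mul_smul_comm, smul_mul_assoc]
  rw [hab', hba, mul_assoc a a a, mul_assoc b b b, hsq]
  module

variable [Field R] [DivisionRing A] [Algebra R A]

theorem inv_eq_smul_of_mul_self_eq_algebraMap {a : A} {r : R} (hr : r ≠ 0)
    (ha : a * a = algebraMap R A r) : a⁻¹ = r⁻¹ • a := by
  refine inv_eq_of_mul_eq_one_right ?_
  rw [mul_smul_comm, ha, Algebra.smul_def, ← map_mul, inv_mul_cancel₀ hr, map_one]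

theorem ne_zero_of_mul_self_eq_algebraMap {a : A} {r : R} (hr : r ≠ 0)
    (ha : a * a = algebraMap R A r) : a ≠ 0 :=
  left_ne_zero_of_mul (ha ▸ (map_ne_zero (algebraMap R A)).mpr hr)

theorem inv_mul_smul_add_smul_mul_inv_eq_neg {a b : A} {r : R} (hr : r ≠ 0)
    (ha : a * a = algebraMap R A r) (hb : b * b = algebraMap R A r) (hab : a * b = -(b * a))
    (α β : R) :
    a⁻¹ * (α • a + β • b) * a⁻¹ = -(b⁻¹ * (α • a + β • b) * b⁻¹) := by
  rw [inv_eq_smul_of_mul_self_eq_algebraMap hr ha, inv_eq_smul_of_mul_self_eq_algebraMap hr hb]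
  simp only [smul_mul_assoc, mul_smul_comm]
  rw [mul_smul_add_smul_mul_eq_neg (ha.trans hb.symm) hab, smul_neg, smul_neg]

end Anticommuting

theorem stmt5_general (h : ℝ → ℝ → ℝ) (fu fv fuv : ℝ → ℝ → Quaternion ℝ)
    (α β : ℝ → ℝ → ℝ)
    (hfuv : ∀ u v, HasDerivAt (fun y => fu u y) (fuv u v) v)
    (hfvu : ∀ u v, HasDerivAt (fun x => fv x v) (fuv u v) u)
    (hconf1 : ∀ u v, (fu u v) ^ 2 = -((Real.exp (2 * h u v) : ℝ) : Quaternion ℝ))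
    (hconf2 : ∀ u v, (fv u v) ^ 2 = -((Real.exp (2 * h u v) : ℝ) : Quaternion ℝ))
    (hconf3 : ∀ u v, fu u v * fv u v = -(fv u v * fu u v))
    (hiso : ∀ u v, fuv u v = α u v • fu u v + β u v • fv u v) :
    ∀ u v, deriv (fun y => -(fu u y)⁻¹) v = deriv (fun x => (fv x v)⁻¹) u := by
  intro u v
  have hr : -Real.exp (2 * h u v) ≠ 0 := neg_ne_zero.mpr (Real.exp_pos _).ne'
  have ha : fu u v * fu u v = algebraMap ℝ (Quaternion ℝ) (-Real.exp (2 * h u v)) := by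
    rw [← sq, hconf1, map_neg, Quaternion.algebraMap_def]
  have hb : fv u v * fv u v = algebraMap ℝ (Quaternion ℝ) (-Real.exp (2 * h u v)) := by
    rw [← sq, hconf2, map_neg, Quaternion.algebraMap_def]
  have hdu := ((hfuv u v).inv' (ne_zero_of_mul_self_eq_algebraMap hr ha)).fun_neg
  have hdv := (hfvu u v).inv' (ne_zero_of_mul_self_eq_algebraMap hr hb)
  rw [hdu.deriv, hdv.deriv, neg_neg, hiso]
  exact inv_mul_smul_add_smul_mul_inv_eq_neg hr ha hb (hconf3 u v) _ _

/-- Let `f : D → Im ℍ` be a smooth conformal immersion, i.e.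
`f_u² = f_v² = -e^{2h}` and `f_u f_v = -f_v f_u`. If moreover
`f_{uv} ∈ span{f_u, f_v}` (i.e. `f` is isothermic), then the quaternionic 1-form
`df* = -(f_u)⁻¹ du + (f_v)⁻¹ dv` is closed: `-∂_v (f_u)⁻¹ = ∂_u (f_v)⁻¹`. -/
theorem stmt5 (h : ℝ → ℝ → ℝ) (f fu fv fuv : ℝ → ℝ → Quaternion ℝ)
    (α β : ℝ → ℝ → ℝ)
    (hIm : ∀ u v, (f u v).re = 0)
    (hfu : ∀ u v, HasDerivAt (fun x => f x v) (fu u v) u)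
    (hfv : ∀ u v, HasDerivAt (fun y => f u y) (fv u v) v)
    (hfuv : ∀ u v, HasDerivAt (fun y => fu u y) (fuv u v) v)
    (hfvu : ∀ u v, HasDerivAt (fun x => fv x v) (fuv u v) u)
    (hconf1 : ∀ u v, (fu u v) ^ 2 = -((Real.exp (2 * h u v) : ℝ) : Quaternion ℝ))
    (hconf2 : ∀ u v, (fv u v) ^ 2 = -((Real.exp (2 * h u v) : ℝ) : Quaternion ℝ))
    (hconf3 : ∀ u v, fu u v * fv u v = -(fv u v * fu u v))
    (hiso : ∀ u v, fuv u v = α u v • fu u v + β u v • fv u v) :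
    ∀ u v, deriv (fun y => -(fu u y)⁻¹) v = deriv (fun x => (fv x v)⁻¹) u :=
  stmt5_general h fu fv fuv α β hfuv hfvu hconf1 hconf2 hconf3 hiso
end

section
/- Suppose smooth real functions h(u,w), U(u), U₁(u) satisfy the Riccati equation h_u = U e^h + U₁ e^{-h} and the harmonic equation h_{uu} + h_{ww} = 0. Then there exists a function U₂(u), depending only on u, such that h_w² = -U₁² e^{-2h} + 2U₁' e^{-h} - U₂ - 2U' e^h - U² e^{2h}. -/
/-! Differentiating the Riccati equation in `u` and using `h_uu = -h_ww` gives, for each fixed `u`,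
the autonomous equation `h_ww = -(U' e^h + U² e^{2h} + U₁' e^{-h} - U₁² e^{-2h})` in `w`.
Multiplied by `2 h_w` it says that the `w`-derivative of the energy
`h_w² + U₁² e^{-2h} - 2U₁' e^{-h} + 2U' e^h + U² e^{2h}` vanishes, so the energy depends
on `u` only. -/

open Real

noncomputable def riccatiEnergy (A B A' B' p q : ℝ) : ℝ :=
  q ^ 2 + B ^ 2 * exp (-(2 * p)) - 2 * B' * exp (-p) + 2 * A' * exp p + A ^ 2 * exp (2 * p)

lemma hasDerivAt_of_riccati {g g' a b : ℝ → ℝ} {a' b' x : ℝ} (hg : HasDerivAt g (g' x) x)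
    (ha : HasDerivAt a a' x) (hb : HasDerivAt b b' x)
    (hric : g' = fun x => a x * exp (g x) + b x * exp (-g x)) :
    HasDerivAt g' (a' * exp (g x) + a x ^ 2 * exp (2 * g x) + b' * exp (-g x)
      - b x ^ 2 * exp (-(2 * g x))) x := by
  subst hric
  refine ((ha.fun_mul hg.exp).fun_add (hb.fun_mul hg.fun_neg.exp)).congr_deriv ?_
  simp only [exp_neg, two_mul, exp_add]
  field_simp
  ring

lemma hasDerivAt_riccatiEnergy {p q : ℝ → ℝ} {q' y : ℝ} (A B A' B' : ℝ)
    (hp : HasDerivAt p (q y) y) (hq : HasDerivAt q q' y) :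
    HasDerivAt (fun y => riccatiEnergy A B A' B' (p y) (q y))
      (2 * q y * (q' + (A' * exp (p y) + A ^ 2 * exp (2 * p y) + B' * exp (-p y)
        - B ^ 2 * exp (-(2 * p y))))) y := by
  have hd := ((((hq.fun_pow 2).fun_add ((hp.const_mul 2).fun_neg.exp.const_mul (B ^ 2))).fun_sub
    (hp.fun_neg.exp.const_mul (2 * B'))).fun_add (hp.exp.const_mul (2 * A'))).fun_add
    ((hp.const_mul 2).exp.const_mul (A ^ 2))
  exact hd.congr_deriv (by ring)

/-- If `h(u,w)` satisfies the Riccati equation `h_u = U e^h + U₁ e^{-h}` and the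
harmonic equation `h_{uu} + h_{ww} = 0`, then there is a function `U₂(u)` of `u`
alone with `h_w² = -U₁² e^{-2h} + 2U₁' e^{-h} - U₂ - 2U' e^h - U² e^{2h}`. -/
theorem stmt11 (h hu hw huu hww : ℝ → ℝ → ℝ) (U U₁ U' U₁' : ℝ → ℝ)
    (hhu : ∀ u w, HasDerivAt (fun x => h x w) (hu u w) u)
    (hhw : ∀ u w, HasDerivAt (fun y => h u y) (hw u w) w)
    (hhuu : ∀ u w, HasDerivAt (fun x => hu x w) (huu u w) u)
    (hhww : ∀ u w, HasDerivAt (fun y => hw u y) (hww u w) w)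
    (hU : ∀ u, HasDerivAt U (U' u) u)
    (hU₁ : ∀ u, HasDerivAt U₁ (U₁' u) u)
    (hric : ∀ u w, hu u w = U u * Real.exp (h u w) + U₁ u * Real.exp (-(h u w)))
    (hharm : ∀ u w, huu u w + hww u w = 0) :
    ∃ U₂ : ℝ → ℝ, ∀ u w,
      (hw u w) ^ 2 =
        -(U₁ u) ^ 2 * Real.exp (-(2 * h u w)) + 2 * U₁' u * Real.exp (-(h u w))
          - U₂ u - 2 * U' u * Real.exp (h u w) - (U u) ^ 2 * Real.exp (2 * h u w) := by
  have hww_eq : ∀ u w, hww u w = -(U' u * exp (h u w) + U u ^ 2 * exp (2 * h u w)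
      + U₁' u * exp (-h u w) - U₁ u ^ 2 * exp (-(2 * h u w))) := fun u w => by
    have hd := hasDerivAt_of_riccati (hhu u w) (hU u) (hU₁ u) (funext fun x => hric x w)
    rw [← (hhuu u w).unique hd]
    linarith [hharm u w]
  have hconst : ∀ u w, riccatiEnergy (U u) (U₁ u) (U' u) (U₁' u) (h u w) (hw u w)
      = riccatiEnergy (U u) (U₁ u) (U' u) (U₁' u) (h u 0) (hw u 0) := fun u => by
    have hd : ∀ y,
        HasDerivAt (fun y => riccatiEnergy (U u) (U₁ u) (U' u) (U₁' u) (h u y) (hw u y)) 0 y :=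
      fun y => by
      simpa [hww_eq] using
        hasDerivAt_riccatiEnergy (U u) (U₁ u) (U' u) (U₁' u) (hhw u y) (hhww u y)
    exact fun w => is_const_of_deriv_eq_zero (fun y => (hd y).differentiableAt)
      (fun y => (hd y).deriv) w 0
  refine ⟨fun u => -riccatiEnergy (U u) (U₁ u) (U' u) (U₁' u) (h u 0) (hw u 0),
    fun u w => ?_⟩
  dsimp only
  rw [← hconst u w, riccatiEnergy]
  ring
end

section
/- Suppose U, U₁, U₂ are smooth functions of u and for all real w the expression A₋₁(u) e^{-h(u,w)} + A₀(u) + A₁(u) e^{h(u,w)} vanishes identically, where h(u,w) takes at least three distinct values of e^h for each fixed u (i.e., e^h depends nontrivially on w). Then A₋₁ = A₀ = A₁ = 0. In particular, compatibility of the Riccati and harmonic equations forces U''/U = U₁''/U₁ = U₂ - 2 U U₁ and (U₂ + 6 U U₁)' = 0, hence U₂ = C₁ - 6 U U₁ for a constant C₁ and U'' = (C₁ - 8 U U₁) U. -/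
/-!
Multiplying by `t = e^h`, a Laurent polynomial `a t⁻¹ + b + c t` becomes a quadratic in `t`,
which vanishes at three distinct points only if it is zero. For the second part, differentiate
the Riccati equation in `w` to get `h_uw = (U e^h - U₁ e^{-h}) h_w`, and the identity for `h_w²`
in `u`, to get `2 h_w h_uw`. Eliminating `h_u`, `h_uw` and `h_w²` leaves a Laurent polynomial in
`e^h` with coefficients in `u` only; its three coefficients are the stated ODEs, and
`(U₂ + 6 U U₁)' = 0` integrates to the constant `C₁`.
-/

open Real

theorem quadratic_coeffs_eq_zero_of_three_roots {K : Type*} [Field K] {a b c t₁ t₂ t₃ : K}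
    (h₁₂ : t₁ ≠ t₂) (h₁₃ : t₁ ≠ t₃) (h₂₃ : t₂ ≠ t₃)
    (e₁ : a + b * t₁ + c * t₁ ^ 2 = 0) (e₂ : a + b * t₂ + c * t₂ ^ 2 = 0)
    (e₃ : a + b * t₃ + c * t₃ ^ 2 = 0) : a = 0 ∧ b = 0 ∧ c = 0 := by
  have h₁₂' := sub_ne_zero.mpr h₁₂
  have h₁₃' := sub_ne_zero.mpr h₁₃
  have h₂₃' := sub_ne_zero.mpr h₂₃
  have hc : c = 0 := by
    have key : c * ((t₁ - t₂) * (t₁ - t₃) * (t₂ - t₃)) = 0 := by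
      linear_combination (t₂ - t₃) * e₁ - (t₁ - t₃) * e₂ + (t₁ - t₂) * e₃
    simpa [h₁₂', h₁₃', h₂₃'] using key
  have hb : b = 0 := by
    have key : b * (t₁ - t₂) = 0 := by
      linear_combination e₁ - e₂ - (t₁ ^ 2 - t₂ ^ 2) * hc
    simpa [h₁₂'] using key
  exact ⟨by linear_combination e₁ - t₁ * hb - t₁ ^ 2 * hc, hb, hc⟩

theorem laurent_coeffs_eq_zero_of_three_values {α K : Type*} [Field K] {a b c : K} (f : α → K)
    (hf : ∀ w, f w ≠ 0) (hthree : ∃ w₁ w₂ w₃, f w₁ ≠ f w₂ ∧ f w₁ ≠ f w₃ ∧ f w₂ ≠ f w₃)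
    (hzero : ∀ w, a * (f w)⁻¹ + b + c * f w = 0) : a = 0 ∧ b = 0 ∧ c = 0 := by
  have hquad : ∀ w, a + b * f w + c * f w ^ 2 = 0 := fun w => by
    linear_combination f w * hzero w - a * mul_inv_cancel₀ (hf w)
  obtain ⟨w₁, w₂, w₃, h₁₂, h₁₃, h₂₃⟩ := hthree
  exact quadratic_coeffs_eq_zero_of_three_roots h₁₂ h₁₃ h₂₃ (hquad w₁) (hquad w₂) (hquad w₃)

theorem exp_laurent_coeffs_eq_zero_of_three_values {α : Type*} {a b c : ℝ} (g : α → ℝ)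
    (hthree : ∃ w₁ w₂ w₃, g w₁ ≠ g w₂ ∧ g w₁ ≠ g w₃ ∧ g w₂ ≠ g w₃)
    (hzero : ∀ w, a * exp (-g w) + b + c * exp (g w) = 0) : a = 0 ∧ b = 0 ∧ c = 0 := by
  obtain ⟨w₁, w₂, w₃, h₁₂, h₁₃, h₂₃⟩ := hthree
  refine laurent_coeffs_eq_zero_of_three_values (fun w => exp (g w)) (fun w => (exp_pos _).ne')
    ⟨w₁, w₂, w₃, exp_injective.ne h₁₂, exp_injective.ne h₁₃, exp_injective.ne h₂₃⟩ fun w => ?_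
  simpa [exp_neg] using hzero w

theorem hasDerivAt_riccati_rhs {f : ℝ → ℝ} {f' p q w : ℝ} (hf : HasDerivAt f f' w) :
    HasDerivAt (fun y => p * exp (f y) + q * exp (-f y))
      ((p * exp (f w) - q * exp (-f w)) * f') w := by
  have hp : HasDerivAt (fun y => p * exp (f y)) _ w := hf.exp.const_mul p
  have hq : HasDerivAt (fun y => q * exp (-f y)) _ w := hf.neg.exp.const_mul q
  refine (hp.add hq).congr_deriv ?_
  simp only [Pi.neg_apply]
  ring

theorem hasDerivAt_integrated_harmonic_rhs {k U U₁ U₂ U' U₁' : ℝ → ℝ} {k' U'' U₁'' U₂' x : ℝ}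
    (hk : HasDerivAt k k' x) (hU : HasDerivAt U (U' x) x) (hU' : HasDerivAt U' U'' x)
    (hU₁ : HasDerivAt U₁ (U₁' x) x) (hU₁' : HasDerivAt U₁' U₁'' x) (hU₂ : HasDerivAt U₂ U₂' x) :
    HasDerivAt (fun x => -(U₁ x) ^ 2 * exp (-(2 * k x)) + 2 * U₁' x * exp (-k x)
        - U₂ x - 2 * U' x * exp (k x) - U x ^ 2 * exp (2 * k x))
      ((-2 * U₁ x * U₁' x + 2 * U₁ x ^ 2 * k') * exp (-(2 * k x))
        + (2 * U₁'' - 2 * U₁' x * k') * exp (-k x) - U₂'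
        - (2 * U'' + 2 * U' x * k') * exp (k x)
        - (2 * U x * U' x + 2 * U x ^ 2 * k') * exp (2 * k x)) x := by
  have h₁ : HasDerivAt (fun x => -(U₁ x) ^ 2 * exp (-(2 * k x))) _ x :=
    (hU₁.pow 2).neg.mul (hk.const_mul 2).neg.exp
  have h₂ : HasDerivAt (fun x => 2 * U₁' x * exp (-k x)) _ x :=
    (hU₁'.const_mul 2).mul hk.neg.exp
  have h₃ : HasDerivAt (fun x => 2 * U' x * exp (k x)) _ x := (hU'.const_mul 2).mul hk.exp
  have h₄ : HasDerivAt (fun x => U x ^ 2 * exp (2 * k x)) _ x :=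
    (hU.pow 2).mul (hk.const_mul 2).exp
  refine ((((h₁.add h₂).sub hU₂).sub h₃).sub h₄).congr_deriv ?_
  simp only [Pi.neg_apply, Pi.pow_apply]
  push_cast
  ring

theorem riccati_harmonic_laurent_identity {h hu hw huw : ℝ → ℝ → ℝ}
    {U U₁ U₂ U' U₁' : ℝ → ℝ} {U'' U₁'' U₂' u w : ℝ}
    (hhu : HasDerivAt (fun x => h x w) (hu u w) u)
    (hhw : HasDerivAt (fun y => h u y) (hw u w) w)
    (hhuw : HasDerivAt (fun y => hu u y) (huw u w) w)
    (hhwu : HasDerivAt (fun x => hw x w) (huw u w) u)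
    (hU : HasDerivAt U (U' u) u) (hU' : HasDerivAt U' U'' u)
    (hU₁ : HasDerivAt U₁ (U₁' u) u) (hU₁' : HasDerivAt U₁' U₁'' u)
    (hU₂ : HasDerivAt U₂ U₂' u)
    (hric : ∀ y, hu u y = U u * exp (h u y) + U₁ u * exp (-h u y))
    (hwsq : ∀ x, hw x w ^ 2 = -(U₁ x) ^ 2 * exp (-(2 * h x w)) + 2 * U₁' x * exp (-h x w)
        - U₂ x - 2 * U' x * exp (h x w) - U x ^ 2 * exp (2 * h x w)) :
    (2 * U₁'' + 4 * U u * U₁ u ^ 2 - 2 * U₁ u * U₂ u) * exp (-h u w)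
      + -(U₂' + 6 * (U' u * U₁ u + U u * U₁' u))
      + -(2 * U'' - 2 * U u * U₂ u + 4 * U u ^ 2 * U₁ u) * exp (h u w) = 0 := by
  have hwuw : huw u w = (U u * exp (h u w) - U₁ u * exp (-h u w)) * hw u w :=
    hhuw.unique ((hasDerivAt_riccati_rhs hhw).congr_of_eventuallyEq (.of_forall hric))
  have hsq_deriv := (hhwu.pow 2).unique
    ((hasDerivAt_integrated_harmonic_rhs hhu hU hU' hU₁ hU₁' hU₂).congr_of_eventuallyEq (.of_forall hwsq))
  have hsq := hwsq u
  rw [hric] at hsq_deriv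
  set t := exp (h u w)
  set y := exp (-h u w)
  have hty : t * y = 1 := by rw [← exp_add, add_neg_cancel, exp_zero]
  have hy₂ : exp (-(2 * h u w)) = y ^ 2 := by rw [← exp_nat_mul]; ring_nf
  have ht₂ : exp (2 * h u w) = t ^ 2 := by rw [← exp_nat_mul]; ring_nf
  rw [hy₂, ht₂] at hsq_deriv hsq
  push_cast at hsq_deriv
  linear_combination (-1 : ℝ) * hsq_deriv + (2 * hw u w) * hwuw + (2 * (U u * t - U₁ u * y)) * hsq
    - (4 * U u * U₁ u ^ 2 * y - 6 * (U u * U₁' u + U' u * U₁ u) - 4 * U u ^ 2 * U₁ u * t) * hty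

theorem stmt12_general (h hu hw huw : ℝ → ℝ → ℝ)
    (Aneg A₀ A₁ : ℝ → ℝ)
    (U U₁ U₂ U' U₁' U₂' U'' U₁'' : ℝ → ℝ)
    -- three distinct values of e^h in w, for each u
    (hthree : ∀ u, ∃ w₁ w₂ w₃ : ℝ,
      h u w₁ ≠ h u w₂ ∧ h u w₁ ≠ h u w₃ ∧ h u w₂ ≠ h u w₃)
    -- part (1) hypothesis
    (hlaurent : ∀ u w,
      Aneg u * Real.exp (-(h u w)) + A₀ u + A₁ u * Real.exp (h u w) = 0)
    -- derivative data
    (hhu : ∀ u w, HasDerivAt (fun x => h x w) (hu u w) u)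
    (hhw : ∀ u w, HasDerivAt (fun y => h u y) (hw u w) w)
    (hhuw : ∀ u w, HasDerivAt (fun y => hu u y) (huw u w) w)
    (hhwu : ∀ u w, HasDerivAt (fun x => hw x w) (huw u w) u)
    (hU : ∀ u, HasDerivAt U (U' u) u) (hU' : ∀ u, HasDerivAt U' (U'' u) u)
    (hU₁ : ∀ u, HasDerivAt U₁ (U₁' u) u) (hU₁' : ∀ u, HasDerivAt U₁' (U₁'' u) u)
    (hU₂ : ∀ u, HasDerivAt U₂ (U₂' u) u)
    -- Riccati equation
    (hric : ∀ u w, hu u w = U u * Real.exp (h u w) + U₁ u * Real.exp (-(h u w)))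
    -- the integrated form of the harmonic equation
    (hwsq : ∀ u w,
      (hw u w) ^ 2 =
        -(U₁ u) ^ 2 * Real.exp (-(2 * h u w)) + 2 * U₁' u * Real.exp (-(h u w))
          - U₂ u - 2 * U' u * Real.exp (h u w) - (U u) ^ 2 * Real.exp (2 * h u w)) :
    (∀ u, Aneg u = 0 ∧ A₀ u = 0 ∧ A₁ u = 0) ∧
    (∀ u, U'' u * U₁ u = U₁'' u * U u) ∧
    (∀ u, U'' u = (U₂ u - 2 * U u * U₁ u) * U u) ∧
    (∀ u, U₂' u + 6 * (U' u * U₁ u + U u * U₁' u) = 0) ∧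
    ∃ C₁ : ℝ, (∀ u, U₂ u = C₁ - 6 * U u * U₁ u) ∧
      ∀ u, U'' u = (C₁ - 8 * U u * U₁ u) * U u := by
  have hcoeffs := fun u => exp_laurent_coeffs_eq_zero_of_three_values (h u) (hthree u)
    fun w => riccati_harmonic_laurent_identity (hhu u w) (hhw u w) (hhuw u w) (hhwu u w)
      (hU u) (hU' u) (hU₁ u) (hU₁' u) (hU₂ u) (hric u) (fun x => hwsq x w)
  have hU'' : ∀ u, U'' u = (U₂ u - 2 * U u * U₁ u) * U u := fun u => by
    linear_combination -(hcoeffs u).2.2 / 2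
  have hU₁'' : ∀ u, U₁'' u = (U₂ u - 2 * U u * U₁ u) * U₁ u := fun u => by
    linear_combination (hcoeffs u).1 / 2
  have hconserved : ∀ u, U₂' u + 6 * (U' u * U₁ u + U u * U₁' u) = 0 := fun u =>
    neg_eq_zero.mp (hcoeffs u).2.1
  have hderiv : ∀ u, HasDerivAt (fun u => U₂ u + 6 * (U u * U₁ u)) 0 u := fun u =>
    ((hU₂ u).add (((hU u).mul (hU₁ u)).const_mul 6)).congr_deriv (hconserved u)
  have hconst : ∀ u, U₂ u + 6 * (U u * U₁ u) = U₂ 0 + 6 * (U 0 * U₁ 0) := fun u =>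
    is_const_of_deriv_eq_zero (fun x => (hderiv x).differentiableAt) (fun x => (hderiv x).deriv) u 0
  refine ⟨fun u => exp_laurent_coeffs_eq_zero_of_three_values (h u) (hthree u) (hlaurent u),
    fun u => by rw [hU'' u, hU₁'' u]; ring, hU'', hconserved,
    U₂ 0 + 6 * (U 0 * U₁ 0), fun u => ?_, fun u => ?_⟩
  · linear_combination hconst u
  · linear_combination hU'' u + U u * hconst u

/-- (1) A Laurent identity `Aneg e^{-h} + A₀ + A₁ e^{h} = 0` holding for all `w`,
where `e^{h(u,·)}` takes at least three distinct values for each `u`, forces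
`Aneg = A₀ = A₁ = 0`.
(2) In particular, compatibility of the Riccati equation `h_u = U e^h + U₁ e^{-h}`
with the harmonic equation (encoded by the identity for `h_w²`) forces
`U''/U = U₁''/U₁ = U₂ - 2UU₁` and `(U₂ + 6UU₁)' = 0`; hence `U₂ = C₁ - 6UU₁` for a
constant `C₁` and `U'' = (C₁ - 8UU₁)U`. -/
theorem stmt12 (h hu hw huw : ℝ → ℝ → ℝ)
    (Aneg A₀ A₁ : ℝ → ℝ)
    (U U₁ U₂ U' U₁' U₂' U'' U₁'' : ℝ → ℝ)
    -- three distinct values of e^h in w, for each u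
    (hthree : ∀ u, ∃ w₁ w₂ w₃ : ℝ,
      h u w₁ ≠ h u w₂ ∧ h u w₁ ≠ h u w₃ ∧ h u w₂ ≠ h u w₃)
    -- part (1) hypothesis
    (hlaurent : ∀ u w,
      Aneg u * Real.exp (-(h u w)) + A₀ u + A₁ u * Real.exp (h u w) = 0)
    -- derivative data
    (hhu : ∀ u w, HasDerivAt (fun x => h x w) (hu u w) u)
    (hhw : ∀ u w, HasDerivAt (fun y => h u y) (hw u w) w)
    (hhuw : ∀ u w, HasDerivAt (fun y => hu u y) (huw u w) w)
    (hhwu : ∀ u w, HasDerivAt (fun x => hw x w) (huw u w) u)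
    (hU : ∀ u, HasDerivAt U (U' u) u) (hU' : ∀ u, HasDerivAt U' (U'' u) u)
    (hU₁ : ∀ u, HasDerivAt U₁ (U₁' u) u) (hU₁' : ∀ u, HasDerivAt U₁' (U₁'' u) u)
    (hU₂ : ∀ u, HasDerivAt U₂ (U₂' u) u)
    -- Riccati equation
    (hric : ∀ u w, hu u w = U u * Real.exp (h u w) + U₁ u * Real.exp (-(h u w)))
    -- the integrated form of the harmonic equation
    (hwsq : ∀ u w,
      (hw u w) ^ 2 =
        -(U₁ u) ^ 2 * Real.exp (-(2 * h u w)) + 2 * U₁' u * Real.exp (-(h u w))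
          - U₂ u - 2 * U' u * Real.exp (h u w) - (U u) ^ 2 * Real.exp (2 * h u w))
    -- nondegeneracy
    (hUnz : ∀ u, U u ≠ 0) (hU₁nz : ∀ u, U₁ u ≠ 0) :
    (∀ u, Aneg u = 0 ∧ A₀ u = 0 ∧ A₁ u = 0) ∧
    (∀ u, U'' u * U₁ u = U₁'' u * U u) ∧
    (∀ u, U'' u = (U₂ u - 2 * U u * U₁ u) * U u) ∧
    (∀ u, U₂' u + 6 * (U' u * U₁ u + U u * U₁' u) = 0) ∧
    ∃ C₁ : ℝ, (∀ u, U₂ u = C₁ - 6 * U u * U₁ u) ∧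
      ∀ u, U'' u = (C₁ - 8 * U u * U₁ u) * U u :=
  stmt12_general h hu hw huw Aneg A₀ A₁ U U₁ U₂ U' U₁' U₂' U'' U₁'' hthree hlaurent hhu hhw hhuw
    hhwu hU hU' hU₁ hU₁' hU₂ hric hwsq
end

section
/- Let U, U₁ be smooth functions satisfying U'' = (C₁ - 8UU₁)U and U₁'' = (C₁ - 8UU₁)U₁. Then the Wronskian C := U' U₁ - U U₁' is constant, and the product θ = U U₁ satisfies θ''' = 4 θ' (C₁ - 12 θ); moreover integrating twice yields (θ')² = -16 θ³ + 4 C₁ θ² + 2 C₂ θ + C² for some constant C₂. -/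
/-- If `U'' = (C₁ - 8UU₁)U` and `U₁'' = (C₁ - 8UU₁)U₁`, then the Wronskian
`C = U'U₁ - UU₁'` is constant, the product `θ = UU₁` satisfies
`θ''' = 4θ'(C₁ - 12θ)`, and integrating twice,
`(θ')² = -16θ³ + 4C₁θ² + 2C₂θ + C²` for some constant `C₂`. -/
theorem stmt13 (C₁ : ℝ) (U U₁ : ℝ → ℝ)
    (hU : ContDiff ℝ (⊤ : ℕ∞) U) (hU₁ : ContDiff ℝ (⊤ : ℕ∞) U₁)
    (hode : ∀ t, deriv (deriv U) t = (C₁ - 8 * U t * U₁ t) * U t)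
    (hode₁ : ∀ t, deriv (deriv U₁) t = (C₁ - 8 * U t * U₁ t) * U₁ t) :
    ∃ C : ℝ,
      (∀ t, deriv U t * U₁ t - U t * deriv U₁ t = C) ∧
      (∀ t, deriv (deriv (deriv (fun s => U s * U₁ s))) t
          = 4 * deriv (fun s => U s * U₁ s) t * (C₁ - 12 * (U t * U₁ t))) ∧
      ∃ C₂ : ℝ, ∀ t,
        (deriv (fun s => U s * U₁ s) t) ^ 2
          = -16 * (U t * U₁ t) ^ 3 + 4 * C₁ * (U t * U₁ t) ^ 2
            + 2 * C₂ * (U t * U₁ t) + C ^ 2 := by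
  have hUd : Differentiable ℝ U := hU.differentiable (by simp)
  have hU₁d : Differentiable ℝ U₁ := hU₁.differentiable (by simp)
  have hcdU := (contDiff_infty_iff_deriv.mp (hU.of_le (by simp))).2
  have hcdU₁ := (contDiff_infty_iff_deriv.mp (hU₁.of_le (by simp))).2
  have hdUd : Differentiable ℝ (deriv U) := hcdU.differentiable (by simp)
  have hdU₁d : Differentiable ℝ (deriv U₁) := hcdU₁.differentiable (by simp)
  have HU : ∀ t, HasDerivAt U (deriv U t) t := fun t => (hUd t).hasDerivAt
  have HU₁ : ∀ t, HasDerivAt U₁ (deriv U₁ t) t := fun t => (hU₁d t).hasDerivAt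
  have HdU : ∀ t, HasDerivAt (deriv U) ((C₁ - 8 * U t * U₁ t) * U t) t := by
    intro t
    have h := (hdUd t).hasDerivAt
    rwa [hode t] at h
  have HdU₁ : ∀ t, HasDerivAt (deriv U₁) ((C₁ - 8 * U t * U₁ t) * U₁ t) t := by
    intro t
    have h := (hdU₁d t).hasDerivAt
    rwa [hode₁ t] at h
  -- Wronskian constant
  have hW : ∀ t, deriv U t * U₁ t - U t * deriv U₁ t
      = deriv U 0 * U₁ 0 - U 0 * deriv U₁ 0 := by
    intro t
    have hdiff : Differentiable ℝ (fun t => deriv U t * U₁ t - U t * deriv U₁ t) :=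
      (hdUd.mul hU₁d).sub (hUd.mul hdU₁d)
    have hzero : ∀ s, deriv (fun t => deriv U t * U₁ t - U t * deriv U₁ t) s = 0 := by
      intro s
      have h := ((HdU s).mul (HU₁ s)).sub ((HU s).mul (HdU₁ s))
      erw [h.deriv]; ring
    exact is_const_of_deriv_eq_zero hdiff hzero t 0
  refine ⟨deriv U 0 * U₁ 0 - U 0 * deriv U₁ 0, hW, ?_, ?_⟩
  · -- third derivative identity
    intro t
    have hθ1 : deriv (fun s => U s * U₁ s)
        = fun t => deriv U t * U₁ t + U t * deriv U₁ t := by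
      funext t; exact ((HU t).mul (HU₁ t)).deriv
    have hθ2 : deriv (deriv (fun s => U s * U₁ s))
        = fun t => (C₁ - 8 * U t * U₁ t) * U t * U₁ t + deriv U t * deriv U₁ t
            + (deriv U t * deriv U₁ t + U t * ((C₁ - 8 * U t * U₁ t) * U₁ t)) := by
      rw [hθ1]
      funext t
      exact (((HdU t).mul (HU₁ t)).add ((HU t).mul (HdU₁ t))).deriv
    rw [hθ2, hθ1]
    have h8 : ∀ s, HasDerivAt (fun s => C₁ - 8 * U s * U₁ s)
        (0 - ((8 * deriv U s) * U₁ s + 8 * U s * deriv U₁ s)) s := fun s =>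
      (hasDerivAt_const s C₁).sub (((HU s).const_mul 8).mul (HU₁ s))
    have H3 := ((((h8 t).mul (HU t)).mul (HU₁ t)).add ((HdU t).mul (HdU₁ t))).add
      (((HdU t).mul (HdU₁ t)).add ((HU t).mul ((h8 t).mul (HU₁ t))))
    erw [H3.deriv]; simp only [Pi.mul_apply]; ring
  · -- first integral
    refine ⟨(4 * (deriv U 0 * deriv U₁ 0) + 16 * (U 0 * U₁ 0) ^ 2
        - 4 * C₁ * (U 0 * U₁ 0)) / 2, fun t => ?_⟩
    have hθ1 : deriv (fun s => U s * U₁ s) t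
        = deriv U t * U₁ t + U t * deriv U₁ t := ((HU t).mul (HU₁ t)).deriv
    have hg : ∀ s, 4 * (deriv U s * deriv U₁ s) + 16 * (U s * U₁ s) ^ 2
        - 4 * C₁ * (U s * U₁ s)
        = 4 * (deriv U 0 * deriv U₁ 0) + 16 * (U 0 * U₁ 0) ^ 2
          - 4 * C₁ * (U 0 * U₁ 0) := by
      intro s
      have hdiff : Differentiable ℝ (fun s => 4 * (deriv U s * deriv U₁ s)
          + 16 * (U s * U₁ s) ^ 2 - 4 * C₁ * (U s * U₁ s)) := by
        apply Differentiable.sub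
        · exact ((hdUd.mul hdU₁d).const_mul 4).add (((hUd.mul hU₁d).pow 2).const_mul 16)
        · exact (hUd.mul hU₁d).const_mul (4 * C₁)
      have hzero : ∀ s, deriv (fun s => 4 * (deriv U s * deriv U₁ s)
          + 16 * (U s * U₁ s) ^ 2 - 4 * C₁ * (U s * U₁ s)) s = 0 := by
        intro s
        have H := ((((HdU s).mul (HdU₁ s)).const_mul 4).add
          ((((HU s).mul (HU₁ s)).pow 2).const_mul 16)).sub
          (((HU s).mul (HU₁ s)).const_mul (4 * C₁))
        erw [H.deriv]; push_cast; simp only [Pi.mul_apply]; ring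
      exact is_const_of_deriv_eq_zero hdiff hzero s 0
    rw [hθ1]
    linear_combination (deriv U t * U₁ t - U t * deriv U₁ t
        + (deriv U 0 * U₁ 0 - U 0 * deriv U₁ 0)) * hW t + (U t * U₁ t) * hg t
end

section
/- The function φ(p) = ∑_{n≥1} (-1)^{n+1} p^n / (1 + (-1)^n p^n)², defined for p ∈ (0,1), is strictly increasing on (0, 1/2), satisfies φ(0⁺) = 0 and φ(1/2) > 1/8. Consequently there exists a unique p₀ ∈ (0, 1/2) with φ(p₀) = 1/8, equivalently a unique rhombic elliptic curve τ₀ = 1/2 + iλ₀ with ϑ₂''(0 | τ₀) = 0. -/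
/-!
On `[0, 1/2]` the terms of `φ` are dominated by `2 · 2⁻ⁿ`, so the series converges uniformly
there and `φ` is continuous with `φ(0) = 0`. Pairing the terms of index `2k+1` and `2k+2` writes
`φ = ∑ₖ g_{2k}` with `g_n(p) = x/(1-x)² - y/(1+y)²`, `x = p^{n+1}`, `y = p^{n+2}`. Since
`(x/(1-x)²)' ≥ 1` and `(y/(1+y)²)' ≤ 1` on `[0,1)`, we get
`g_n'(p) ≥ pⁿ((n+1) - (n+2)p) > 0` for `0 < p < 1/2`, so every pair, and hence `φ`, is strictly
increasing. The first pair alone gives `φ(1/2) ≥ g_0(1/2) = 46/25 > 1/8`, and the intermediate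
value theorem yields the root.
-/

open Set Filter Topology

/-- `φ(p) = ∑_{n≥1} (-1)^{n+1} pⁿ / (1 + (-1)ⁿ pⁿ)²`. -/
noncomputable def phi15 (p : ℝ) : ℝ :=
  ∑' n : ℕ, ((-1 : ℝ) ^ n * p ^ (n + 1)) / (1 + (-1 : ℝ) ^ (n + 1) * p ^ (n + 1)) ^ 2

noncomputable def phiTerm (p : ℝ) (n : ℕ) : ℝ :=
  ((-1 : ℝ) ^ n * p ^ (n + 1)) / (1 + (-1 : ℝ) ^ (n + 1) * p ^ (n + 1)) ^ 2

noncomputable def phiPair (n : ℕ) (p : ℝ) : ℝ :=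
  p ^ (n + 1) / (1 - p ^ (n + 1)) ^ 2 - p ^ (n + 2) / (1 + p ^ (n + 2)) ^ 2

lemma phi15_eq_tsum_phiTerm (p : ℝ) : phi15 p = ∑' n, phiTerm p n := rfl

section Convergence

variable {p : ℝ}

lemma one_half_le_phiTerm_denom (hp : p ∈ Icc (0 : ℝ) (1 / 2)) (n : ℕ) :
    1 / 2 ≤ 1 + (-1 : ℝ) ^ (n + 1) * p ^ (n + 1) := by
  have hsign : |(-1 : ℝ) ^ (n + 1) * p ^ (n + 1)| = p ^ (n + 1) := by
    rw [abs_mul, abs_pow, abs_neg, abs_one, one_pow, one_mul, abs_of_nonneg (pow_nonneg hp.1 _)]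
  linarith [hp.2, neg_abs_le ((-1 : ℝ) ^ (n + 1) * p ^ (n + 1)),
    pow_le_of_le_one hp.1 (by linarith [hp.2]) n.add_one_ne_zero]

lemma norm_phiTerm_le (hp : p ∈ Icc (0 : ℝ) (1 / 2)) (n : ℕ) :
    ‖phiTerm p n‖ ≤ 2 * (1 / 2) ^ n := by
  have hden := one_half_le_phiTerm_denom hp n
  rw [phiTerm, norm_div, norm_mul, norm_pow, norm_neg, norm_one, one_pow, one_mul, norm_pow,
    Real.norm_of_nonneg hp.1, norm_pow, Real.norm_of_nonneg (by linarith),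
    div_le_iff₀ (by positivity)]
  calc p ^ (n + 1) ≤ (1 / 2) ^ (n + 1) := pow_le_pow_left₀ hp.1 hp.2 _
    _ = 2 * (1 / 2) ^ n * (1 / 2) ^ 2 := by ring
    _ ≤ 2 * (1 / 2) ^ n * (1 + (-1) ^ (n + 1) * p ^ (n + 1)) ^ 2 := by gcongr

lemma summable_phiTerm (hp : p ∈ Icc (0 : ℝ) (1 / 2)) : Summable (phiTerm p) :=
  Summable.of_norm_bounded (summable_geometric_two.mul_left 2) (norm_phiTerm_le hp)

lemma continuousOn_phi15 : ContinuousOn phi15 (Icc 0 (1 / 2)) := by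
  refine continuousOn_tsum (fun n => ?_) (summable_geometric_two.mul_left 2)
    (fun n p hp => norm_phiTerm_le hp n)
  refine ContinuousOn.div (by fun_prop) (by fun_prop) fun p hp => ?_
  have := one_half_le_phiTerm_denom hp n
  positivity

lemma phi15_zero : phi15 0 = 0 := by
  simp [phi15]

lemma phiTerm_two_mul_add_phiTerm_two_mul_add_one (p : ℝ) (k : ℕ) :
    phiTerm p (2 * k) + phiTerm p (2 * k + 1) = phiPair (2 * k) p := by
  simp only [phiTerm, phiPair, pow_succ, pow_mul]
  ring

lemma hasSum_phiPair (hp : p ∈ Icc (0 : ℝ) (1 / 2)) :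
    HasSum (fun k => phiPair (2 * k) p) (phi15 p) := by
  have heven := ((summable_phiTerm hp).comp_injective fun a b h => by omega :
    Summable fun k => phiTerm p (2 * k)).hasSum
  have hodd := ((summable_phiTerm hp).comp_injective fun a b h => by omega :
    Summable fun k => phiTerm p (2 * k + 1)).hasSum
  rw [phi15_eq_tsum_phiTerm, (heven.even_add_odd hodd).tsum_eq]
  simpa only [Function.comp_def, phiTerm_two_mul_add_phiTerm_two_mul_add_one] using heven.add hodd

end Convergence

section PairMonotone

lemma hasDerivAt_div_one_sub_sq {x : ℝ} (hx : x ≠ 1) :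
    HasDerivAt (fun x => x / (1 - x) ^ 2) ((1 + x) / (1 - x) ^ 3) x := by
  have hx' : 1 - x ≠ 0 := sub_ne_zero.2 (Ne.symm hx)
  refine ((hasDerivAt_id' x).fun_div (((hasDerivAt_const x 1).fun_sub (hasDerivAt_id' x)).fun_pow 2)
    (pow_ne_zero 2 hx')).congr_deriv ?_
  field_simp
  ring

lemma hasDerivAt_div_one_add_sq {y : ℝ} (hy : y ≠ -1) :
    HasDerivAt (fun y => y / (1 + y) ^ 2) ((1 - y) / (1 + y) ^ 3) y := by
  have hy' : 1 + y ≠ 0 := fun h => hy (by linarith)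
  refine ((hasDerivAt_id' y).fun_div (((hasDerivAt_const y 1).fun_add (hasDerivAt_id' y)).fun_pow 2)
    (pow_ne_zero 2 hy')).congr_deriv ?_
  field_simp
  ring

lemma hasDerivAt_phiPair (n : ℕ) {p : ℝ} (h0 : 0 ≤ p) (h1 : p < 1) :
    HasDerivAt (phiPair n)
      ((1 + p ^ (n + 1)) / (1 - p ^ (n + 1)) ^ 3 * ((n + 1) * p ^ n) -
        (1 - p ^ (n + 2)) / (1 + p ^ (n + 2)) ^ 3 * ((n + 2) * p ^ (n + 1))) p := by
  have hx : p ^ (n + 1) ≠ 1 := (pow_lt_one₀ h0 h1 n.add_one_ne_zero).ne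
  have hy : p ^ (n + 2) ≠ -1 := by linarith [pow_nonneg h0 (n + 2)]
  have hpow (m : ℕ) : HasDerivAt (fun p : ℝ => p ^ (m + 1)) ((m + 1) * p ^ m) p := by
    simpa using hasDerivAt_pow (m + 1) p
  have hfirst : HasDerivAt (fun p : ℝ => p ^ (n + 1) / (1 - p ^ (n + 1)) ^ 2)
      ((1 + p ^ (n + 1)) / (1 - p ^ (n + 1)) ^ 3 * ((n + 1) * p ^ n)) p :=
    (hasDerivAt_div_one_sub_sq hx).comp (h := fun p : ℝ => p ^ (n + 1)) p (hpow n)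
  have hsecond : HasDerivAt (fun p : ℝ => p ^ (n + 2) / (1 + p ^ (n + 2)) ^ 2)
      ((1 - p ^ (n + 2)) / (1 + p ^ (n + 2)) ^ 3 * ((n + 2) * p ^ (n + 1))) p := by
    refine ((hasDerivAt_div_one_add_sq hy).comp (h := fun p : ℝ => p ^ (n + 2)) p
      (hpow (n + 1))).congr_deriv ?_
    push_cast
    ring
  exact hfirst.sub hsecond

lemma phiPair_deriv_pos (n : ℕ) {p : ℝ} (h0 : 0 < p) (h1 : p < (n + 1) / (n + 2)) :
    0 < (1 + p ^ (n + 1)) / (1 - p ^ (n + 1)) ^ 3 * ((n + 1) * p ^ n) -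
      (1 - p ^ (n + 2)) / (1 + p ^ (n + 2)) ^ 3 * ((n + 2) * p ^ (n + 1)) := by
  have hp1 : p < 1 := h1.trans ((div_lt_one (by positivity)).2 (by linarith))
  have hx0 : 0 ≤ p ^ (n + 1) := by positivity
  have hx1 : p ^ (n + 1) < 1 := pow_lt_one₀ h0.le hp1 n.add_one_ne_zero
  have hy0 : 0 ≤ p ^ (n + 2) := by positivity
  have hgrowth : 1 ≤ (1 + p ^ (n + 1)) / (1 - p ^ (n + 1)) ^ 3 := by
    rw [one_le_div (pow_pos (sub_pos.2 hx1) 3)]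
    linarith [pow_le_one₀ (n := 3) (sub_nonneg.2 hx1.le) (by linarith : 1 - p ^ (n + 1) ≤ 1)]
  have hdecay : (1 - p ^ (n + 2)) / (1 + p ^ (n + 2)) ^ 3 ≤ 1 := by
    refine div_le_one_of_le₀ ?_ (by positivity)
    linarith [one_le_pow₀ (n := 3) (by linarith : 1 ≤ 1 + p ^ (n + 2))]
  have hdominant : (n + 2) * p ^ (n + 1) < (n + 1) * p ^ n := by
    rw [lt_div_iff₀ (by positivity)] at h1
    rw [pow_succ, mul_comm _ p, ← mul_assoc]
    exact mul_lt_mul_of_pos_right (by linarith) (by positivity)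
  calc 0 < (n + 1) * p ^ n - (n + 2) * p ^ (n + 1) := sub_pos.2 hdominant
    _ ≤ _ := sub_le_sub (le_mul_of_one_le_left (by positivity) hgrowth)
      (mul_le_of_le_one_left (by positivity) hdecay)

lemma strictMonoOn_phiPair (n : ℕ) : StrictMonoOn (phiPair n) (Icc 0 ((n + 1) / (n + 2))) := by
  have hlt : ((n : ℝ) + 1) / (n + 2) < 1 := (div_lt_one (by positivity)).2 (by linarith)
  refine strictMonoOn_of_deriv_pos (convex_Icc _ _)
    (fun p hp => (hasDerivAt_phiPair n hp.1 (hp.2.trans_lt hlt)).continuousAt.continuousWithinAt)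
    fun p hp => ?_
  rw [interior_Icc] at hp
  rw [(hasDerivAt_phiPair n hp.1.le (hp.2.trans hlt)).deriv]
  exact phiPair_deriv_pos n hp.1 hp.2

lemma phiPair_nonneg (n : ℕ) {p : ℝ} (hp : p ∈ Icc 0 ((n + 1 : ℝ) / (n + 2))) :
    0 ≤ phiPair n p := by
  simpa [phiPair] using
    (strictMonoOn_phiPair n).monotoneOn (left_mem_Icc.2 (by positivity)) hp hp.1

lemma Icc_zero_half_subset (n : ℕ) : Icc (0 : ℝ) (1 / 2) ⊆ Icc 0 ((n + 1) / (n + 2)) :=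
  Icc_subset_Icc_right <| by rw [div_le_div_iff₀ (by norm_num) (by positivity)]; linarith

end PairMonotone

lemma strictMonoOn_phi15 : StrictMonoOn phi15 (Ioo 0 (1 / 2)) := by
  intro p hp q hq hpq
  have hpairs (k : ℕ) : phiPair (2 * k) p < phiPair (2 * k) q :=
    strictMonoOn_phiPair (2 * k) (Icc_zero_half_subset _ (Ioo_subset_Icc_self hp))
      (Icc_zero_half_subset _ (Ioo_subset_Icc_self hq)) hpq
  exact hasSum_lt (fun k => (hpairs k).le) (hpairs 0)
    (hasSum_phiPair (Ioo_subset_Icc_self hp)) (hasSum_phiPair (Ioo_subset_Icc_self hq))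

lemma tendsto_phi15_nhdsGT_zero : Tendsto phi15 (𝓝[>] 0) (𝓝 0) := by
  have hcont := (continuousOn_phi15 0 (left_mem_Icc.2 (by norm_num))).mono_of_mem_nhdsWithin
    (Icc_mem_nhdsGT (by norm_num))
  simpa only [phi15_zero] using hcont.tendsto

lemma one_eighth_lt_phi15_half : 1 / 8 < phi15 (1 / 2) := by
  have hhalf : (1 / 2 : ℝ) ∈ Icc 0 (1 / 2) := right_mem_Icc.2 (by norm_num)
  calc 1 / 8 < phiPair (2 * 0) (1 / 2) := by norm_num [phiPair]
    _ ≤ phi15 (1 / 2) := le_hasSum (hasSum_phiPair hhalf) 0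
      fun k _ => phiPair_nonneg _ (Icc_zero_half_subset _ hhalf)

/-- `φ` is strictly increasing on `(0, 1/2)`, tends to `0` at `0⁺`, and
`φ(1/2) > 1/8`; consequently there is a unique `p₀ ∈ (0, 1/2)` with `φ(p₀) = 1/8`
(equivalently, a unique rhombic elliptic curve `τ₀ = 1/2 + iλ₀` with
`ϑ₂''(0 | τ₀) = 0`). -/
theorem stmt15 :
    StrictMonoOn phi15 (Set.Ioo (0 : ℝ) (1 / 2)) ∧
    Filter.Tendsto phi15 (nhdsWithin 0 (Set.Ioi 0)) (nhds 0) ∧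
    1 / 8 < phi15 (1 / 2) ∧
    ∃! p₀ : ℝ, p₀ ∈ Set.Ioo (0 : ℝ) (1 / 2) ∧ phi15 p₀ = 1 / 8 := by
  refine ⟨strictMonoOn_phi15, tendsto_phi15_nhdsGT_zero, one_eighth_lt_phi15_half, ?_⟩
  obtain ⟨p₀, hp₀, hφ⟩ : (1 / 8 : ℝ) ∈ phi15 '' Ioo 0 (1 / 2) :=
    intermediate_value_Ioo (by norm_num) continuousOn_phi15
      ⟨by norm_num [phi15_zero], one_eighth_lt_phi15_half⟩
  exact ⟨p₀, ⟨hp₀, hφ⟩, fun q hq => strictMonoOn_phi15.injOn hq.1 hp₀ (hq.2.trans hφ.symm)⟩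
end
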